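/- Let X be a random variable taking values in a σ-finite measure space (X,𝒳,μ) with μ_X ≪ μ, and assume ‖dμ_X/dμ‖_∞^{(μ)} < ∞ or |h_μ(X)| < ∞. Let (Y,𝒴,ν) be a finite measure space and ρ: X×Y → [0,∞] a measurable distortion function. Let k, m, c, b ∈ (0,∞) and δ₀ ∈ (0,∞], and suppose: (i) μ is ρ^{1/k}-subregular of dimension m with subregularity constants c and δ₀; (ii) ν is ρ^{1/k}-superregular of dimension m with superregularity constants b and δ₀; (iii) sup_{x∈X,y∈Y} ρ(x,y)^{1/k} < ∞ if δ₀ < ∞; and (iv) μ(X) = 1 if both δ₀ < ∞ and ‖dμ_X/dμ‖_∞^{(μ)} = ∞. Then the k-th quantization dimension exists and equals m, i.e., lim_{n→∞} k·log(n)/log(1/V_n(X)) = m. -/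

import Mathlib

open MeasureTheory Filter
open scoped ENNReal Classical

/-- The `n`-th quantization error `V_n(X) = inf_f E[ρ(X, f(X))]`, the infimum being over
all measurable maps `f : X → Y` whose range contains at most `n` points. -/
noncomputable def quantErr {X Y : Type*} [MeasurableSpace X] [MeasurableSpace Y]
    (μX : Measure X) (ρ : X → Y → ℝ≥0∞) (n : ℕ) : ℝ≥0∞ :=
  ⨅ (f : X → Y)
    (_ : Measurable f ∧ ∃ s : Finset Y, s.card ≤ n ∧ ∀ x, f x ∈ s),
    ∫⁻ x, ρ x (f x) ∂μX

/-- The quantity `k·log n / log(1/V_n(X))`, whose `liminf`/`limsup` as `n → ∞` are the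
lower/upper `k`-th quantization dimensions. -/
noncomputable def qRatio {X Y : Type*} [MeasurableSpace X] [MeasurableSpace Y]
    (μX : Measure X) (ρ : X → Y → ℝ≥0∞) (k : ℝ) (n : ℕ) : ℝ :=
  k * Real.log n / Real.log (1 / (quantErr μX ρ n).toReal)

/-!
Lower bound: since `μX ≪ μ` and `μX` is finite, sets of small `μ`-measure have `μX`-measure
below `1/2`. By subregularity, the points within `ρ^{1/k}`-distance `t` of an `n`-point codebook
have `μ`-measure at most `n c t^m`; taking `t^m ≍ 1/n`, at least half of the `μX`-mass pays
distortion `≥ t^k`, so `V_n ≳ n^{-k/m}`.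

Upper bound: draw the `n` codebook points independently from the normalized `ν`. By
superregularity a fixed `x` stays at distance `≥ t` from all of them with probability at most
`(1 - b t^m)^n ≤ exp (-n b t^m)`, and on that event the distortion is at most `sup ρ`. Taking
`b t^m = (k/m) log n / n` gives `V_n ≲ (log n / n)^{k/m}`.

Both bounds give `log (1 / V_n) ~ (k/m) log n`. Superregularity of the finite measure `ν` forces
`δ₀ < ∞`, which is what makes `ρ` bounded.
-/

open scoped NNReal Topology

theorem MeasureTheory.Measure.AbsolutelyContinuous.exists_pos_forall_measure_lt
    {α : Type*} [MeasurableSpace α] {ν μ : Measure α} [IsFiniteMeasure ν] (h : ν ≪ μ)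
    {ε : ℝ≥0∞} (hε : 0 < ε) : ∃ δ > 0, ∀ s, μ s < δ → ν s < ε := by
  -- Borel–Cantelli: sets `s n` with `μ (s n) < 2⁻¹ ^ n` and `ε ≤ ν (s n)` have a `μ`-null
  -- `limsup` of `ν`-measure at least `ε`
  by_contra! H
  choose s hμs hνs using fun n : ℕ => H (2⁻¹ ^ n) (ENNReal.pow_pos (by norm_num) n)
  set t : ℕ → Set α := fun n => toMeasurable μ (s n)
  have hμ : μ (limsup t atTop) = 0 := by
    refine measure_limsup_atTop_eq_zero (ne_top_of_le_ne_top ?_ (ENNReal.tsum_le_tsum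
      fun n => (measure_toMeasurable (s n)).trans_le (hμs n).le))
    simp [ENNReal.tsum_geometric]
  have hν : ε ≤ ν (limsup t atTop) := by
    rw [limsup_eq_iInf_iSup_of_nat]
    change ε ≤ ν (⋂ n, ⋃ i ≥ n, t i)
    rw [Antitone.measure_iInter]
    · exact le_iInf fun n => (hνs n).trans <| (measure_mono (subset_toMeasurable μ (s n))).trans
        (measure_mono fun x hx => Set.mem_iUnion₂.2 ⟨n, le_rfl, hx⟩)
    · exact fun m n hmn => Set.biUnion_mono (fun i hi => le_trans hmn hi) fun _ _ => le_rfl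
    · exact fun n => (MeasurableSet.biUnion (Set.to_countable _)
        fun i _ => measurableSet_toMeasurable μ (s i)).nullMeasurableSet
    · exact ⟨0, measure_ne_top ν _⟩
  exact hε.not_ge (hν.trans (h hμ).le)

theorem ENNReal.rpow_one_div_lt_ofReal_iff {z : ℝ≥0∞} {t k : ℝ} (ht : 0 < t) (hk : 0 < k) :
    z ^ (1 / k) < ENNReal.ofReal t ↔ z < ENNReal.ofReal (t ^ k) := by
  rw [← ENNReal.ofReal_rpow_of_pos ht, ← ENNReal.rpow_lt_rpow_iff hk, ← ENNReal.rpow_mul,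
    one_div_mul_cancel hk.ne', ENNReal.rpow_one]

theorem lintegral_iInf_pi_le {Y : Type*} [MeasurableSpace Y] (P : Measure Y)
    [IsProbabilityMeasure P] {n : ℕ} [NeZero n] {g : Y → ℝ≥0∞} (hg : Measurable g) {B : ℝ≥0∞}
    (hgB : ∀ y, g y ≤ B) (T : ℝ≥0∞) :
    ∫⁻ y, ⨅ i, g (y i) ∂(Measure.pi fun _ : Fin n => P) ≤ T + B * P {y | T ≤ g y} ^ n := by
  set E : Set (Fin n → Y) := Set.univ.pi fun _ => {y | T ≤ g y}
  have hE : MeasurableSet E := .univ_pi fun _ => measurableSet_le measurable_const hg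
  have hpoint : ∀ y : Fin n → Y, ⨅ i, g (y i) ≤ T + E.indicator (fun _ => B) y := by
    intro y
    by_cases hy : y ∈ E
    · rw [Set.indicator_of_mem hy]
      exact (iInf_le _ 0).trans ((hgB _).trans le_add_self)
    · rw [Set.indicator_of_notMem hy, add_zero]
      obtain ⟨i, hi⟩ := not_forall.1 fun h => hy (Set.mem_univ_pi.2 h)
      exact (iInf_le _ i).trans (not_le.1 hi).le
  calc ∫⁻ y, ⨅ i, g (y i) ∂(Measure.pi fun _ : Fin n => P)
      ≤ ∫⁻ y, T + E.indicator (fun _ => B) y ∂(Measure.pi fun _ : Fin n => P) :=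
        lintegral_mono hpoint
    _ = T + B * P {y | T ≤ g y} ^ n := by
        rw [lintegral_add_left measurable_const, lintegral_const, measure_univ, mul_one,
          lintegral_indicator_const hE, Measure.pi_pi, Finset.prod_const, Finset.card_univ,
          Fintype.card_fin]

theorem ENNReal.one_sub_ofReal_pow_le {w : ℝ} (hw : 0 ≤ w) (n : ℕ) :
    (1 - ENNReal.ofReal w) ^ n ≤ ENNReal.ofReal (Real.exp (-(n * w))) := by
  rw [← ENNReal.ofReal_one, ← ENNReal.ofReal_sub _ hw, ← mul_neg, Real.exp_nat_mul,
    ENNReal.ofReal_pow (Real.exp_pos _).le]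
  exact pow_le_pow_left' (ENNReal.ofReal_le_ofReal (Real.one_sub_le_exp_neg w)) n

theorem exists_le_coe_of_iSup_rpow_lt_top {X Y : Type*} {ρ : X → Y → ℝ≥0∞} {k : ℝ} (hk : 0 < k)
    (h : (⨆ x, ⨆ y, ρ x y ^ (1 / k)) < ∞) : ∃ B : ℝ≥0, ∀ x y, ρ x y ≤ B := by
  refine ⟨((⨆ x, ⨆ y, ρ x y ^ (1 / k)) ^ k).toNNReal, fun x y => ?_⟩
  rw [ENNReal.coe_toNNReal (ENNReal.rpow_ne_top_of_nonneg hk.le h.ne)]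
  calc ρ x y = (ρ x y ^ (1 / k)) ^ k := by
        rw [← ENNReal.rpow_mul, one_div_mul_cancel hk.ne', ENNReal.rpow_one]
    _ ≤ _ := ENNReal.rpow_le_rpow (le_iSup₂ (f := fun x y => ρ x y ^ (1 / k)) x y) hk.le

theorem Real.log_one_div_le_of_le {r C p x : ℝ} (hC : 0 < C) (hx : 0 < x)
    (h : C * x ^ (-p) ≤ r) : Real.log (1 / r) ≤ p * Real.log x - Real.log C := by
  have hlog := Real.log_le_log (by positivity) h
  rw [Real.log_mul hC.ne' (by positivity), Real.log_rpow hx] at hlog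
  rw [one_div, Real.log_inv]
  linarith

theorem Real.le_log_one_div_of_le {r D p x : ℝ} (hr : 0 < r) (hD : 0 < D) (hx : 1 < x)
    (h : r ≤ D * (Real.log x / x) ^ p) :
    p * Real.log x - (Real.log D + p * Real.log (Real.log x)) ≤ Real.log (1 / r) := by
  have hlog := Real.log_le_log hr h
  rw [Real.log_mul hD.ne' (by have := Real.log_pos hx; positivity),
    Real.log_rpow (by have := Real.log_pos hx; positivity),
    Real.log_div (Real.log_pos hx).ne' (by positivity)] at hlog
  rw [one_div, Real.log_inv]
  linarith

theorem tendsto_log_one_div_div_log_of_le_of_le {V : ℕ → ℝ≥0∞} {p C D : ℝ} (hC : 0 < C)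
    (hD : 0 < D) (hlow : ∀ᶠ n : ℕ in atTop, ENNReal.ofReal (C * n ^ (-p)) ≤ V n)
    (hup : ∀ᶠ n : ℕ in atTop, V n ≤ ENNReal.ofReal (D * (Real.log n / n) ^ p)) :
    Tendsto (fun n : ℕ => Real.log (1 / (V n).toReal) / Real.log n) atTop (𝓝 p) := by
  have hlog : Tendsto (fun n : ℕ => Real.log n) atTop atTop :=
    Real.tendsto_log_atTop.comp tendsto_natCast_atTop_atTop
  have hlo : Tendsto (fun n : ℕ => p - (Real.log D + p * Real.log (Real.log n)) / Real.log n)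
      atTop (𝓝 p) := by
    have := ((tendsto_const_nhds (x := Real.log D)).div_atTop hlog).add
      ((Real.isLittleO_log_id_atTop.tendsto_div_nhds_zero.comp hlog).const_mul p)
    simpa [add_div, mul_div_assoc] using (tendsto_const_nhds (x := p)).sub this
  have hhi : Tendsto (fun n : ℕ => p - Real.log C / Real.log n) atTop (𝓝 p) := by
    simpa using (tendsto_const_nhds (x := p)).sub (tendsto_const_nhds.div_atTop hlog)
  have hbounds : ∀ᶠ n : ℕ in atTop,
      p - (Real.log D + p * Real.log (Real.log n)) / Real.log n
        ≤ Real.log (1 / (V n).toReal) / Real.log n ∧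
      Real.log (1 / (V n).toReal) / Real.log n ≤ p - Real.log C / Real.log n := by
    filter_upwards [hlow, hup, eventually_ge_atTop 2] with n hlow hup hn
    have hn : (1 : ℝ) < n := by exact_mod_cast hn
    have hL : 0 < Real.log n := Real.log_pos hn
    have hlow := (ENNReal.ofReal_le_iff_le_toReal (ne_top_of_le_ne_top ENNReal.ofReal_ne_top
      hup)).1 hlow
    have hup := ENNReal.toReal_le_of_le_ofReal (by positivity) hup
    have hV : 0 < (V n).toReal := hlow.trans_lt' (by positivity)
    constructor
    · rw [le_div_iff₀ hL, sub_mul, div_mul_cancel₀ _ hL.ne']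
      linarith [Real.le_log_one_div_of_le hV hD hn hup]
    · rw [div_le_iff₀ hL, sub_mul, div_mul_cancel₀ _ hL.ne']
      linarith [Real.log_one_div_le_of_le hC (by positivity) hlow]
  exact tendsto_of_tendsto_of_tendsto_of_le_of_le' hlo hhi (hbounds.mono fun _ => And.left)
    (hbounds.mono fun _ => And.right)

section Subregular

variable {X Y : Type*} [MeasurableSpace X]

def IsSubregular (μ : Measure X) (d : X → Y → ℝ≥0∞) (m c : ℝ) (δ₀ : ℝ≥0∞) : Prop :=
  ∀ y : Y, ∀ t : ℝ, 0 < t → ENNReal.ofReal t < δ₀ →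
    μ {x | d x y < ENNReal.ofReal t} ≤ ENNReal.ofReal (c * t ^ m)

theorem IsSubregular.measure_lt_comp_le {μ : Measure X} {d : X → Y → ℝ≥0∞} {m c : ℝ}
    {δ₀ : ℝ≥0∞} (h : IsSubregular μ d m c δ₀) {f : X → Y} {s : Finset Y} (hfs : ∀ x, f x ∈ s)
    {t : ℝ} (ht : 0 < t) (htδ₀ : ENNReal.ofReal t < δ₀) :
    μ {x | d x (f x) < ENNReal.ofReal t} ≤ s.card * ENNReal.ofReal (c * t ^ m) :=
  calc μ {x | d x (f x) < ENNReal.ofReal t}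
      ≤ μ (⋃ y ∈ s, {x | d x y < ENNReal.ofReal t}) :=
        measure_mono fun x hx => Set.mem_biUnion (hfs x) hx
    _ ≤ ∑ y ∈ s, μ {x | d x y < ENNReal.ofReal t} := measure_biUnion_finset_le s _
    _ ≤ ∑ _y ∈ s, ENNReal.ofReal (c * t ^ m) := Finset.sum_le_sum fun y _ => h y t ht htδ₀
    _ = s.card * ENNReal.ofReal (c * t ^ m) := by rw [Finset.sum_const, nsmul_eq_mul]

end Subregular

section Superregular

variable {X Y : Type*} [MeasurableSpace Y]

def IsSuperregular (ν : Measure Y) (d : X → Y → ℝ≥0∞) (m b : ℝ) (δ₀ : ℝ≥0∞) : Prop :=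
  ∀ x : X, ∀ t : ℝ, 0 < t → ENNReal.ofReal t < δ₀ →
    ENNReal.ofReal (b * t ^ m) ≤ ν {y | d x y < ENNReal.ofReal t}

variable {ν : Measure Y} {d : X → Y → ℝ≥0∞} {m b : ℝ} {δ₀ : ℝ≥0∞}

theorem IsSuperregular.smul (h : IsSuperregular ν d m b δ₀) {a : ℝ≥0∞} (ha : a ≠ ∞) :
    IsSuperregular (a • ν) d m (a.toReal * b) δ₀ := fun x t ht htδ₀ => by
  rw [mul_assoc, ENNReal.ofReal_mul ENNReal.toReal_nonneg, ENNReal.ofReal_toReal ha,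
    Measure.smul_apply, smul_eq_mul]
  exact mul_le_mul_right (h x t ht htδ₀) a

theorem IsSuperregular.ne_zero [Nonempty X] (h : IsSuperregular ν d m b δ₀) (hb : 0 < b)
    (hδ₀ : 0 < δ₀) : ν ≠ 0 := by
  obtain ⟨t, -, ht, htδ₀⟩ := ENNReal.lt_iff_exists_real_btwn.1 hδ₀
  have ht : 0 < t := ENNReal.ofReal_pos.1 ht
  intro hν
  have := h (Classical.arbitrary X) t ht htδ₀
  rw [hν, Measure.coe_zero, Pi.zero_apply, nonpos_iff_eq_zero, ENNReal.ofReal_eq_zero] at this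
  exact this.not_gt (by positivity)

theorem IsSuperregular.lt_top [Nonempty X] [IsFiniteMeasure ν] (h : IsSuperregular ν d m b δ₀)
    (hm : 0 < m) (hb : 0 < b) : δ₀ < ∞ := by
  by_contra! hδ₀
  set V := (ν Set.univ).toReal
  set t := ((V + 1) / b) ^ m⁻¹
  have hbt : b * t ^ m = V + 1 := by
    rw [← Real.rpow_mul (by positivity), inv_mul_cancel₀ hm.ne', Real.rpow_one]
    field_simp
  have := (h (Classical.arbitrary X) t (by positivity)
    (hδ₀.trans_lt' ENNReal.ofReal_lt_top)).trans (measure_mono (Set.subset_univ _))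
  rw [hbt, ← ENNReal.ofReal_toReal (measure_ne_top ν _),
    ENNReal.ofReal_le_ofReal_iff ENNReal.toReal_nonneg] at this
  linarith

end Superregular

section Quantization

variable {X Y : Type*} [MeasurableSpace X] [MeasurableSpace Y] {μX : Measure X}
  {ρ : X → Y → ℝ≥0∞}

theorem quantErr_le_lintegral_iInf (hρ : Measurable (Function.uncurry ρ)) {n : ℕ} [NeZero n]
    (y : Fin n → Y) : quantErr μX ρ n ≤ ∫⁻ x, ⨅ i, ρ x (y i) ∂μX := by
  -- a nearest codeword, selected by least index in `ℕ` so that `Measurable.find` applies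
  set z : ℕ → Y := fun i => y (Fin.ofNat n i)
  have hz : ∀ x, ∃ i, ρ x (z i) ≤ ⨅ j, ρ x (y j) := fun x => by
    obtain ⟨j, hj⟩ := Finite.exists_min fun j => ρ x (y j)
    exact ⟨j, by simpa [z, Fin.ofNat_val_eq_self] using hj⟩
  have hmeas : Measurable fun x => z (Nat.find (hz x)) :=
    Measurable.find (f := fun i _ => z i) (fun _ => measurable_const)
      (fun i => measurableSet_le (hρ.comp (measurable_id.prodMk measurable_const))
        (Measurable.iInf fun j => hρ.comp (measurable_id.prodMk measurable_const))) hz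
  refine iInf₂_le_of_le _ ⟨hmeas, Finset.univ.image y, Finset.card_image_le.trans (by simp),
    fun x => Finset.mem_image_of_mem y (Finset.mem_univ _)⟩ (lintegral_mono fun x => ?_)
  exact Nat.find_spec (hz x)

theorem quantErr_le_lintegral_lintegral_pi [SFinite μX] (hρ : Measurable (Function.uncurry ρ))
    {n : ℕ} [NeZero n] (P : Measure Y) [IsProbabilityMeasure P] :
    quantErr μX ρ n ≤ ∫⁻ x, ∫⁻ y, ⨅ i, ρ x (y i) ∂(Measure.pi fun _ : Fin n => P) ∂μX := by
  have hF : Measurable (Function.uncurry fun x (y : Fin n → Y) => ⨅ i, ρ x (y i)) :=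
    Measurable.iInf fun i => hρ.comp (measurable_fst.prodMk ((measurable_pi_apply i).comp
      measurable_snd))
  rw [lintegral_lintegral_swap hF.aemeasurable]
  calc quantErr μX ρ n = ∫⁻ _, quantErr μX ρ n ∂(Measure.pi fun _ : Fin n => P) := by simp
    _ ≤ _ := lintegral_mono fun y => quantErr_le_lintegral_iInf hρ y

theorem le_quantErr_of_isSubregular [IsProbabilityMeasure μX] {μ : Measure X} {k m c : ℝ}
    {δ₀ δ : ℝ≥0∞} (hρ : Measurable (Function.uncurry ρ)) (hk : 0 < k)
    (hsub : IsSubregular μ (fun x y => ρ x y ^ (1 / k)) m c δ₀)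
    (hδ : ∀ s, μ s < δ → μX s < 2⁻¹) {n : ℕ} {t : ℝ} (ht : 0 < t)
    (htδ₀ : ENNReal.ofReal t < δ₀) (hn : n * ENNReal.ofReal (c * t ^ m) < δ) :
    ENNReal.ofReal (t ^ k) * 2⁻¹ ≤ quantErr μX ρ n := by
  refine le_iInf₂ fun f ⟨hf, s, hs, hfs⟩ => ?_
  set T := ENNReal.ofReal (t ^ k)
  have hρf : Measurable fun x => ρ x (f x) := hρ.comp (measurable_id.prodMk hf)
  have hsmall : μX {x | ρ x (f x) < T} < 2⁻¹ := by
    refine hδ _ (lt_of_le_of_lt ?_ hn)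
    have := hsub.measure_lt_comp_le hfs ht htδ₀
    simp only [ENNReal.rpow_one_div_lt_ofReal_iff ht hk] at this
    exact this.trans (by gcongr)
  have hlarge : 2⁻¹ ≤ μX {x | T ≤ ρ x (f x)} := by
    have hcompl : {x | T ≤ ρ x (f x)} = {x | ρ x (f x) < T}ᶜ := by ext; simp
    rw [hcompl, prob_compl_eq_one_sub (measurableSet_lt hρf measurable_const),
      ← ENNReal.one_sub_inv_two]
    exact tsub_le_tsub_left hsmall.le 1
  calc T * 2⁻¹ ≤ T * μX {x | T ≤ ρ x (f x)} := by gcongr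
    _ ≤ ∫⁻ x, ρ x (f x) ∂μX := mul_meas_ge_le_lintegral₀ hρf.aemeasurable T

theorem exists_pos_eventually_le_quantErr [IsProbabilityMeasure μX] {μ : Measure X}
    {k m c : ℝ} {δ₀ : ℝ≥0∞} (hac : μX ≪ μ) (hρ : Measurable (Function.uncurry ρ))
    (hk : 0 < k) (hm : 0 < m) (hc : 0 < c) (hδ₀ : 0 < δ₀)
    (hsub : IsSubregular μ (fun x y => ρ x y ^ (1 / k)) m c δ₀) :
    ∃ C > 0, ∀ᶠ n : ℕ in atTop, ENNReal.ofReal (C * n ^ (-(k / m))) ≤ quantErr μX ρ n := by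
  obtain ⟨δ, hδ, hac'⟩ := hac.exists_pos_forall_measure_lt (ε := 2⁻¹) (by norm_num)
  obtain ⟨a, -, ha, haδ⟩ := ENNReal.lt_iff_exists_real_btwn.1 hδ
  have ha : 0 < a := ENNReal.ofReal_pos.1 ha
  set t : ℕ → ℝ := fun n => (a / c / n) ^ m⁻¹
  have ht0 : Tendsto (fun n => ENNReal.ofReal (t n)) atTop (𝓝 0) := by
    have := (tendsto_const_div_atTop_nhds_zero_nat (a / c)).rpow_const
      (Or.inr (inv_nonneg.2 hm.le))
    rw [Real.zero_rpow (inv_ne_zero hm.ne')] at this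
    simpa using ENNReal.tendsto_ofReal this
  refine ⟨(a / c) ^ (k / m) / 2, by positivity, ?_⟩
  filter_upwards [ht0.eventually_lt_const hδ₀, eventually_gt_atTop 0] with n htδ₀ hn
  have hn : (0 : ℝ) < n := Nat.cast_pos.2 hn
  have hct : n * ENNReal.ofReal (c * t n ^ m) = ENNReal.ofReal a := by
    rw [← ENNReal.ofReal_natCast, ← ENNReal.ofReal_mul hn.le, ← Real.rpow_mul (by positivity),
      inv_mul_cancel₀ hm.ne', Real.rpow_one]
    field_simp
  have htk : t n ^ k / 2 = (a / c) ^ (k / m) / 2 * n ^ (-(k / m)) := by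
    rw [← Real.rpow_mul (by positivity), Real.div_rpow (by positivity) hn.le, Real.rpow_neg hn.le]
    field_simp
  calc ENNReal.ofReal ((a / c) ^ (k / m) / 2 * n ^ (-(k / m)))
      = ENNReal.ofReal (t n ^ k) * 2⁻¹ := by
        rw [← htk, div_eq_mul_inv, ENNReal.ofReal_mul (by positivity),
          ENNReal.ofReal_inv_of_pos two_pos, ENNReal.ofReal_ofNat]
    _ ≤ quantErr μX ρ n :=
        le_quantErr_of_isSubregular hρ hk hsub hac' (by positivity) htδ₀ (hct ▸ haδ)

theorem quantErr_le_of_isSuperregular [IsProbabilityMeasure μX] {P : Measure Y}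
    [IsProbabilityMeasure P] {k m b : ℝ} {δ₀ : ℝ≥0∞} (hρ : Measurable (Function.uncurry ρ))
    (hk : 0 < k) (hb : 0 ≤ b) (hsup : IsSuperregular P (fun x y => ρ x y ^ (1 / k)) m b δ₀)
    {B : ℝ≥0} (hB : ∀ x y, ρ x y ≤ B) {n : ℕ} [NeZero n] {t : ℝ} (ht : 0 < t)
    (htδ₀ : ENNReal.ofReal t < δ₀) :
    quantErr μX ρ n
      ≤ ENNReal.ofReal (t ^ k) + B * ENNReal.ofReal (Real.exp (-(n * (b * t ^ m)))) := by
  set T := ENNReal.ofReal (t ^ k)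
  have hρx : ∀ x, Measurable (ρ x) := fun x => hρ.comp (measurable_const.prodMk measurable_id)
  have hfar : ∀ x, P {y | T ≤ ρ x y} ≤ 1 - ENNReal.ofReal (b * t ^ m) := by
    intro x
    have hnear := hsup x t ht htδ₀
    simp only [ENNReal.rpow_one_div_lt_ofReal_iff ht hk] at hnear
    have hcompl : {y | T ≤ ρ x y} = {y | ρ x y < T}ᶜ := by ext; simp
    rw [hcompl, prob_compl_eq_one_sub (measurableSet_lt (hρx x) measurable_const)]
    exact tsub_le_tsub_left hnear 1
  calc quantErr μX ρ n
      ≤ ∫⁻ x, ∫⁻ y, ⨅ i, ρ x (y i) ∂(Measure.pi fun _ : Fin n => P) ∂μX :=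
        quantErr_le_lintegral_lintegral_pi hρ P
    _ ≤ ∫⁻ _, T + B * ENNReal.ofReal (Real.exp (-(n * (b * t ^ m)))) ∂μX := by
        refine lintegral_mono fun x => (lintegral_iInf_pi_le P (hρx x) (hB x) T).trans ?_
        gcongr
        exact (pow_le_pow_left' (hfar x) n).trans
          (ENNReal.one_sub_ofReal_pow_le (by positivity) n)
    _ = T + B * ENNReal.ofReal (Real.exp (-(n * (b * t ^ m)))) := by
        rw [lintegral_const, measure_univ, mul_one]

theorem exists_pos_eventually_quantErr_le [IsProbabilityMeasure μX] {P : Measure Y}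
    [IsProbabilityMeasure P] {k m b : ℝ} {δ₀ : ℝ≥0∞} (hρ : Measurable (Function.uncurry ρ))
    (hk : 0 < k) (hm : 0 < m) (hb : 0 < b) (hδ₀ : 0 < δ₀)
    (hsup : IsSuperregular P (fun x y => ρ x y ^ (1 / k)) m b δ₀) {B : ℝ≥0}
    (hB : ∀ x y, ρ x y ≤ B) :
    ∃ D > 0, ∀ᶠ n : ℕ in atTop,
      quantErr μX ρ n ≤ ENNReal.ofReal (D * (Real.log n / n) ^ (k / m)) := by
  set p := k / m
  have hp : 0 < p := div_pos hk hm
  -- `t n` is chosen so that the bound `exp (-n b t^m)` on the uncovered probability is `n^(-p)`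
  set t : ℕ → ℝ := fun n => (p * Real.log n / n / b) ^ m⁻¹
  have ht0 : Tendsto (fun n => ENNReal.ofReal (t n)) atTop (𝓝 0) := by
    have hw : Tendsto (fun n : ℕ => p * Real.log n / n) atTop (𝓝 0) := by
      simpa [mul_div_assoc] using (Real.isLittleO_log_id_atTop.tendsto_div_nhds_zero.comp
        tendsto_natCast_atTop_atTop).const_mul p
    have := (hw.div_const b).rpow_const (Or.inr (inv_nonneg.2 hm.le))
    rw [zero_div, Real.zero_rpow (inv_ne_zero hm.ne')] at this
    simpa using ENNReal.tendsto_ofReal this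
  refine ⟨(p / b) ^ p + B, by positivity, ?_⟩
  filter_upwards [ht0.eventually_lt_const hδ₀, eventually_ge_atTop 3] with n htδ₀ hn
  have : NeZero n := ⟨by omega⟩
  have hn : (3 : ℝ) ≤ n := by exact_mod_cast hn
  have hlog : 1 ≤ Real.log n := by
    rw [Real.le_log_iff_exp_le (by linarith)]
    linarith [Real.exp_one_lt_d9]
  have ht : 0 < t n := by positivity
  have htk : t n ^ k = (p / b) ^ p * (Real.log n / n) ^ p := by
    rw [← Real.rpow_mul (by positivity), ← Real.mul_rpow (by positivity) (by positivity),
      inv_mul_eq_div]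
    congr 1
    field_simp
  have hexp : Real.exp (-(n * (b * t n ^ m))) = n ^ (-p) := by
    rw [← Real.rpow_mul (by positivity), inv_mul_cancel₀ hm.ne', Real.rpow_one,
      Real.rpow_def_of_pos (by positivity)]
    field_simp
  have hpow : n ^ (-p) ≤ (Real.log n / n) ^ p := by
    rw [Real.rpow_neg (by positivity), ← Real.inv_rpow (by positivity), inv_eq_one_div]
    gcongr
  calc quantErr μX ρ n
      ≤ ENNReal.ofReal (t n ^ k) + B * ENNReal.ofReal (Real.exp (-(n * (b * t n ^ m)))) :=
        quantErr_le_of_isSuperregular hρ hk hb.le hsup hB ht htδ₀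
    _ = ENNReal.ofReal (t n ^ k + B * n ^ (-p)) := by
        rw [hexp, ENNReal.ofReal_add (by positivity) (by positivity),
          ENNReal.ofReal_mul B.coe_nonneg, ENNReal.ofReal_coe_nnreal]
    _ ≤ ENNReal.ofReal (((p / b) ^ p + B) * (Real.log n / n) ^ p) := by
        rw [htk, add_mul]
        gcongr

end Quantization

theorem quantization_dimension_exists_eq_general
    {X Y : Type*} [MeasurableSpace X] [MeasurableSpace Y]
    (μ : Measure X) (μX : Measure X) [IsProbabilityMeasure μX]
    (hac : μX ≪ μ)
    (ν : Measure Y) [IsFiniteMeasure ν]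
    (ρ : X → Y → ℝ≥0∞) (hρ : Measurable (Function.uncurry ρ))
    (k m c b : ℝ) (δ₀ : ℝ≥0∞)
    (hk : 0 < k) (hm : 0 < m) (hc : 0 < c) (hb : 0 < b) (hδ₀ : 0 < δ₀)
    (hsub : ∀ y : Y, ∀ t : ℝ, 0 < t → ENNReal.ofReal t < δ₀ →
      μ {x | (ρ x y) ^ (1 / k) < ENNReal.ofReal t} ≤ ENNReal.ofReal (c * t ^ m))
    (hsup : ∀ x : X, ∀ t : ℝ, 0 < t → ENNReal.ofReal t < δ₀ →
      ENNReal.ofReal (b * t ^ m) ≤ ν {y | (ρ x y) ^ (1 / k) < ENNReal.ofReal t})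
    (hβ : δ₀ < ∞ → (⨆ x : X, ⨆ y : Y, (ρ x y) ^ (1 / k)) < ∞) :
    Filter.liminf (fun n : ℕ => ((qRatio μX ρ k n : ℝ) : EReal)) atTop = ((m : ℝ) : EReal) ∧
    Filter.limsup (fun n : ℕ => ((qRatio μX ρ k n : ℝ) : EReal)) atTop = ((m : ℝ) : EReal) := by
  replace hsub : IsSubregular μ (fun x y => ρ x y ^ (1 / k)) m c δ₀ := hsub
  replace hsup : IsSuperregular ν (fun x y => ρ x y ^ (1 / k)) m b δ₀ := hsup
  have := nonempty_of_isProbabilityMeasure μX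
  have : NeZero ν := ⟨hsup.ne_zero hb hδ₀⟩
  obtain ⟨C, hC, hlow⟩ := exists_pos_eventually_le_quantErr hac hρ hk hm hc hδ₀ hsub
  obtain ⟨B, hB⟩ := exists_le_coe_of_iSup_rpow_lt_top hk (hβ (hsup.lt_top hm hb))
  have hν : (ν Set.univ)⁻¹ ≠ ∞ :=
    ENNReal.inv_ne_top.2 (Measure.measure_univ_ne_zero.2 (NeZero.ne ν))
  have hb' : 0 < (ν Set.univ)⁻¹.toReal * b :=
    mul_pos (ENNReal.toReal_pos (ENNReal.inv_ne_zero.2 (measure_ne_top ν _)) hν) hb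
  obtain ⟨D, hD, hup⟩ := exists_pos_eventually_quantErr_le (μX := μX) hρ hk hm hb' hδ₀
    (hsup.smul hν) hB
  have hq : Tendsto (qRatio μX ρ k) atTop (𝓝 m) := by
    have := (tendsto_const_nhds (x := k)).div
      (tendsto_log_one_div_div_log_of_le_of_le hC hD hlow hup) (div_pos hk hm).ne'
    rw [div_div_cancel₀ hk.ne'] at this
    exact this.congr fun n => div_div_eq_mul_div _ _ _
  have hE := EReal.tendsto_coe.2 hq
  exact ⟨hE.liminf_eq, hE.limsup_eq⟩

/-- Suppose `μ_X ≪ μ` with `‖dμ_X/dμ‖_∞^{(μ)} < ∞` or finite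
generalized entropy, `μ` is `ρ^{1/k}`-subregular of dimension `m` with constants `c, δ₀`,
`ν` is a finite measure that is `ρ^{1/k}`-superregular of dimension `m` with constants
`b, δ₀`, `sup_{x,y} ρ(x,y)^{1/k} < ∞` if `δ₀ < ∞`, and `μ(X) = 1` if both `δ₀ < ∞` and
`‖dμ_X/dμ‖_∞^{(μ)} = ∞`.  Then the `k`-th quantization dimension exists and equals `m`. -/
theorem quantization_dimension_exists_eq
    {X Y : Type*} [MeasurableSpace X] [MeasurableSpace Y]
    (μ : Measure X) [SigmaFinite μ] (μX : Measure X) [IsProbabilityMeasure μX]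
    (hac : μX ≪ μ)
    (hor : essSup (μX.rnDeriv μ) μ < ∞ ∨
      Integrable (fun x => Real.log ((μX.rnDeriv μ x).toReal)) μX)
    (ν : Measure Y) [IsFiniteMeasure ν]
    (ρ : X → Y → ℝ≥0∞) (hρ : Measurable (Function.uncurry ρ))
    (k m c b : ℝ) (δ₀ : ℝ≥0∞)
    (hk : 0 < k) (hm : 0 < m) (hc : 0 < c) (hb : 0 < b) (hδ₀ : 0 < δ₀)
    (hsub : ∀ y : Y, ∀ t : ℝ, 0 < t → ENNReal.ofReal t < δ₀ →
      μ {x | (ρ x y) ^ (1 / k) < ENNReal.ofReal t} ≤ ENNReal.ofReal (c * t ^ m))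
    (hsup : ∀ x : X, ∀ t : ℝ, 0 < t → ENNReal.ofReal t < δ₀ →
      ENNReal.ofReal (b * t ^ m) ≤ ν {y | (ρ x y) ^ (1 / k) < ENNReal.ofReal t})
    (hβ : δ₀ < ∞ → (⨆ x : X, ⨆ y : Y, (ρ x y) ^ (1 / k)) < ∞)
    (hμ1 : δ₀ < ∞ ∧ essSup (μX.rnDeriv μ) μ = ∞ → μ Set.univ = 1) :
    Filter.liminf (fun n : ℕ => ((qRatio μX ρ k n : ℝ) : EReal)) atTop = ((m : ℝ) : EReal) ∧
    Filter.limsup (fun n : ℕ => ((qRatio μX ρ k n : ℝ) : EReal)) atTop = ((m : ℝ) : EReal) :=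
  quantization_dimension_exists_eq_general μ μX hac ν ρ hρ k m c b δ₀ hk hm hc hb hδ₀ hsub hsup hβ
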